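/- arXiv:2311.01664 — 4 statements merged into one kernel-verified Lean document; each statement's English description precedes it below -/
import Mathlib

section
/- Let H be a real Hilbert space and E : H → ℝ twice continuously differentiable. Let x₀ ∈ H and η, σ, L > 0 satisfy: (i) ‖∇E(x₀)‖ ≤ η; (ii) ⟪Hess E(x₀) v, v⟫ ≥ σ‖v‖² for all v ∈ H; (iii) ‖Hess E(x) − Hess E(y)‖ ≤ L‖x − y‖ (operator norm) for all x, y in the closed ball of radius 2η/σ around x₀; and (iv) 2Lη/σ² < 1. Then there exists x̄ with ‖x̄ − x₀‖ ≤ 2η/σ such that ∇E(x̄) = 0 and ⟪Hess E(x̄) v, v⟫ ≥ (σ − 2Lη/σ)‖v‖² for all v ∈ H. -/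
open scoped RealInnerProductSpace
open Metric Set

/-!
Let `A` be the Hessian at `x₀`. By coercivity and Lax–Milgram, `A` is invertible with
`‖A⁻¹‖ ≤ 1 / σ`. The simplified Newton map `x ↦ x - A⁻¹ ∇E(x)` maps the ball of radius
`r = 2η/σ` around `x₀` into itself, because the Lipschitz bound on the Hessian makes the Taylor
remainder `‖∇E(x) - ∇E(x₀) - A (x - x₀)‖` at most `L/2 ‖x - x₀‖² ≤ η`; and it contracts
with constant `L r / σ = 2Lη/σ² < 1`. Its fixed point is a critical point, where the Hessian
is within `L r` of `A` in operator norm, which lowers the coercivity constant by at most `L r`.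
-/

section Banach

variable {E F : Type*} [NormedAddCommGroup E] [NormedSpace ℝ E]
  [NormedAddCommGroup F] [NormedSpace ℝ F]

theorem Convex.norm_image_sub_le_half_mul_sq {s : Set E} (hs : Convex ℝ s) {f : E → F}
    {f' : E → E →L[ℝ] F} {A : E →L[ℝ] F} {x₀ x : E} {L : ℝ}
    (hf : ∀ z ∈ s, HasFDerivAt f (f' z) z) (hf' : ∀ z ∈ s, ‖f' z - A‖ ≤ L * ‖z - x₀‖)
    (hx₀ : x₀ ∈ s) (hx : x ∈ s) :
    ‖f x - f x₀ - A (x - x₀)‖ ≤ L / 2 * ‖x - x₀‖ ^ 2 := by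
  set w := x - x₀
  have hseg : ∀ t ∈ Icc (0 : ℝ) 1, x₀ + t • w ∈ s := fun t ht => hs.add_smul_sub_mem hx₀ hx ht
  set g : ℝ → F := fun t => f (x₀ + t • w) - f x₀ - t • A w
  have hg : ∀ t ∈ Icc (0 : ℝ) 1, HasDerivAt g (f' (x₀ + t • w) w - A w) t := by
    intro t ht
    have hline : HasDerivAt (fun t : ℝ => x₀ + t • w) w t := by
      simpa using ((hasDerivAt_id t).smul_const w).const_add x₀
    have hlin : HasDerivAt (fun t : ℝ => t • A w) (A w) t := by
      simpa using (hasDerivAt_id t).smul_const (A w)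
    exact (((hf _ (hseg t ht)).comp_hasDerivAt t hline).sub_const (f x₀)).sub hlin
  have hB : ∀ t, HasDerivAt (fun t => L * ‖w‖ ^ 2 / 2 * t ^ 2) (L * ‖w‖ ^ 2 * t) t := by
    intro t
    refine ((hasDerivAt_pow 2 t).const_mul (L * ‖w‖ ^ 2 / 2)).congr_deriv ?_
    norm_num
    ring
  have hbound : ∀ t ∈ Ico (0 : ℝ) 1, ‖f' (x₀ + t • w) w - A w‖ ≤ L * ‖w‖ ^ 2 * t := by
    intro t ht
    have hz : ‖x₀ + t • w - x₀‖ = t * ‖w‖ := by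
      rw [add_sub_cancel_left, norm_smul, Real.norm_of_nonneg ht.1]
    calc ‖f' (x₀ + t • w) w - A w‖ = ‖(f' (x₀ + t • w) - A) w‖ := rfl
      _ ≤ ‖f' (x₀ + t • w) - A‖ * ‖w‖ := ContinuousLinearMap.le_opNorm _ _
      _ ≤ L * (t * ‖w‖) * ‖w‖ := by
        gcongr
        exact hz ▸ hf' _ (hseg t (Ico_subset_Icc_self ht))
      _ = L * ‖w‖ ^ 2 * t := by ring
  have key := image_norm_le_of_norm_deriv_right_le_deriv_boundary
    (fun t ht => (hg t ht).continuousAt.continuousWithinAt)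
    (fun t ht => (hg t (Ico_subset_Icc_self ht)).hasDerivWithinAt) (by simp [g]) hB hbound
    (right_mem_Icc.2 zero_le_one)
  have hg1 : g 1 = f x - f x₀ - A w := by simp [g, w]
  rw [← hg1]
  linarith

def simplifiedNewtonMap (A : E ≃L[ℝ] F) (f : E → F) (x : E) : E :=
  x - A.symm (f x)

theorem simplifiedNewtonMap_sub (A : E ≃L[ℝ] F) (f : E → F) (x y : E) :
    simplifiedNewtonMap A f x - simplifiedNewtonMap A f y =
      -A.symm (f x - f y - A (x - y)) := by
  simp only [simplifiedNewtonMap, map_sub, ContinuousLinearEquiv.symm_apply_apply]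
  abel

theorem isFixedPt_simplifiedNewtonMap_iff {A : E ≃L[ℝ] F} {f : E → F} {x : E} :
    Function.IsFixedPt (simplifiedNewtonMap A f) x ↔ f x = 0 := by
  simp [Function.IsFixedPt, simplifiedNewtonMap]

theorem ContinuousLinearEquiv.norm_symm_apply_le_div {A : E ≃L[ℝ] F} {σ : ℝ} (hσ : 0 < σ)
    (hA : ∀ v, σ * ‖v‖ ≤ ‖A v‖) (w : F) : ‖A.symm w‖ ≤ ‖w‖ / σ :=
  (le_div_iff₀' hσ).2 (by simpa using hA (A.symm w))

theorem Convex.lipschitzOnWith_simplifiedNewtonMap {s : Set E} (hs : Convex ℝ s) {f : E → F}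
    {f' : E → E →L[ℝ] F} (A : E ≃L[ℝ] F) {σ K : ℝ} (hσ : 0 < σ) (hA : ∀ v, σ * ‖v‖ ≤ ‖A v‖)
    (hf : ∀ z ∈ s, HasFDerivWithinAt f (f' z) s z) (hf' : ∀ z ∈ s, ‖f' z - A‖ ≤ K) :
    LipschitzOnWith (K / σ).toNNReal (simplifiedNewtonMap A f) s := by
  refine LipschitzOnWith.of_dist_le_mul fun x hx y hy => ?_
  rw [dist_eq_norm, dist_eq_norm, simplifiedNewtonMap_sub, norm_neg]
  calc ‖A.symm (f x - f y - A (x - y))‖ ≤ ‖f x - f y - A (x - y)‖ / σ :=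
        A.norm_symm_apply_le_div hσ hA _
    _ ≤ K * ‖x - y‖ / σ := by
        gcongr
        exact hs.norm_image_sub_le_of_norm_hasFDerivWithin_le' hf hf' hy hx
    _ = K / σ * ‖x - y‖ := by ring
    _ ≤ (K / σ).toNNReal * ‖x - y‖ := by gcongr; exact Real.le_coe_toNNReal _

theorem mapsTo_simplifiedNewtonMap_closedBall {f : E → F} {f' : E → E →L[ℝ] F}
    (A : E ≃L[ℝ] F) {x₀ : E} {η σ L : ℝ} (hσ : 0 < σ) (hL : 0 ≤ L)
    (hA : ∀ v, σ * ‖v‖ ≤ ‖A v‖) (hfx₀ : ‖f x₀‖ ≤ η)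
    (hf : ∀ x ∈ closedBall x₀ (2 * η / σ), HasFDerivAt f (f' x) x)
    (hf' : ∀ x ∈ closedBall x₀ (2 * η / σ), ‖f' x - A‖ ≤ L * ‖x - x₀‖)
    (hsmall : 2 * L * η / σ ^ 2 ≤ 1) :
    MapsTo (simplifiedNewtonMap A f) (closedBall x₀ (2 * η / σ)) (closedBall x₀ (2 * η / σ)) := by
  set r := 2 * η / σ with hr
  have hη : 0 ≤ η := (norm_nonneg _).trans hfx₀
  have hx₀ : x₀ ∈ closedBall x₀ r := mem_closedBall_self (by positivity)
  intro x hx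
  have hxr : ‖x - x₀‖ ≤ r := mem_closedBall_iff_norm.1 hx
  have hquad : ‖f x - f x₀ - A (x - x₀)‖ ≤ η :=
    calc ‖f x - f x₀ - A (x - x₀)‖ ≤ L / 2 * ‖x - x₀‖ ^ 2 :=
          (convex_closedBall x₀ r).norm_image_sub_le_half_mul_sq hf hf' hx₀ hx
      _ ≤ L / 2 * r ^ 2 := by gcongr
      _ = η * (2 * L * η / σ ^ 2) := by rw [hr]; field_simp
      _ ≤ η := mul_le_of_le_one_right hη hsmall
  have hΦ : simplifiedNewtonMap A f x - x₀ = -A.symm (f x - f x₀ - A (x - x₀) + f x₀) := by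
    simp only [simplifiedNewtonMap, map_sub, map_add, ContinuousLinearEquiv.symm_apply_apply]
    abel
  rw [mem_closedBall_iff_norm, hΦ, norm_neg]
  calc ‖A.symm (f x - f x₀ - A (x - x₀) + f x₀)‖
      ≤ ‖f x - f x₀ - A (x - x₀) + f x₀‖ / σ := A.norm_symm_apply_le_div hσ hA _
    _ ≤ (η + η) / σ := by gcongr; exact (norm_add_le _ _).trans (add_le_add hquad hfx₀)
    _ = r := by rw [hr]; ring

theorem exists_zero_mem_closedBall_of_norm_fderiv_sub_le [CompleteSpace E] {f : E → F}
    {f' : E → E →L[ℝ] F} (A : E ≃L[ℝ] F) {x₀ : E} {η σ L : ℝ} (hσ : 0 < σ) (hL : 0 ≤ L)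
    (hA : ∀ v, σ * ‖v‖ ≤ ‖A v‖) (hfx₀ : ‖f x₀‖ ≤ η)
    (hf : ∀ x ∈ closedBall x₀ (2 * η / σ), HasFDerivAt f (f' x) x)
    (hf' : ∀ x ∈ closedBall x₀ (2 * η / σ), ‖f' x - A‖ ≤ L * ‖x - x₀‖)
    (hsmall : 2 * L * η / σ ^ 2 < 1) :
    ∃ x ∈ closedBall x₀ (2 * η / σ), f x = 0 := by
  set r := 2 * η / σ with hr
  have hx₀ : x₀ ∈ closedBall x₀ r :=
    mem_closedBall_self (div_nonneg (mul_nonneg zero_le_two ((norm_nonneg _).trans hfx₀)) hσ.le)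
  have hmaps := mapsTo_simplifiedNewtonMap_closedBall A hσ hL hA hfx₀ hf hf' hsmall.le
  have hf'r : ∀ z ∈ closedBall x₀ r, ‖f' z - A‖ ≤ L * r := fun z hz =>
    (hf' z hz).trans (mul_le_mul_of_nonneg_left (mem_closedBall_iff_norm.1 hz) hL)
  have hlip := (convex_closedBall x₀ r).lipschitzOnWith_simplifiedNewtonMap A hσ hA
    (fun z hz => (hf z hz).hasFDerivWithinAt) hf'r
  have hk : L * r / σ = 2 * L * η / σ ^ 2 := by rw [hr]; field_simp
  have hcontr : ContractingWith (L * r / σ).toNNReal (hmaps.restrict _ _ _) :=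
    ⟨Real.toNNReal_lt_one.2 (hk ▸ hsmall), hlip.mapsToRestrict hmaps⟩
  obtain ⟨x, hxr, hfix, -⟩ :=
    hcontr.exists_fixedPoint' isClosed_closedBall.isComplete hmaps hx₀ (edist_ne_top _ _)
  exact ⟨x, hxr, isFixedPt_simplifiedNewtonMap_iff.1 hfix⟩

end Banach

section InnerProduct

variable {H : Type*} [NormedAddCommGroup H] [InnerProductSpace ℝ H]

theorem mul_norm_le_norm_apply_of_coercive {A : H →L[ℝ] H} {σ : ℝ}
    (hA : ∀ v, σ * ‖v‖ ^ 2 ≤ ⟪A v, v⟫) (v : H) : σ * ‖v‖ ≤ ‖A v‖ := by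
  rcases (norm_nonneg v).eq_or_lt with hv | hv
  · simp [← hv]
  · refine le_of_mul_le_mul_right ?_ hv
    calc σ * ‖v‖ * ‖v‖ = σ * ‖v‖ ^ 2 := by ring
      _ ≤ ⟪A v, v⟫ := hA v
      _ ≤ ‖A v‖ * ‖v‖ := real_inner_le_norm _ _

theorem exists_continuousLinearEquiv_eq_of_coercive [CompleteSpace H] {A : H →L[ℝ] H} {σ : ℝ}
    (hσ : 0 < σ) (hA : ∀ v, σ * ‖v‖ ^ 2 ≤ ⟪A v, v⟫) :
    ∃ e : H ≃L[ℝ] H, (e : H →L[ℝ] H) = A := by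
  have hcoer : IsCoercive ((innerSL ℝ).comp A) :=
    ⟨σ, hσ, fun v => by simpa [mul_assoc, sq] using hA v⟩
  refine ⟨hcoer.continuousLinearEquivOfBilin, ContinuousLinearMap.ext fun v => ?_⟩
  refine ext_inner_right ℝ fun w => ?_
  simp [hcoer.continuousLinearEquivOfBilin_apply]

theorem le_inner_apply_self_of_norm_sub_le {A B : H →L[ℝ] H} {σ δ : ℝ}
    (hA : ∀ v, σ * ‖v‖ ^ 2 ≤ ⟪A v, v⟫) (hB : ‖B - A‖ ≤ δ) (v : H) :
    (σ - δ) * ‖v‖ ^ 2 ≤ ⟪B v, v⟫ := by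
  have hdiff : |⟪(B - A) v, v⟫| ≤ δ * ‖v‖ ^ 2 :=
    calc |⟪(B - A) v, v⟫| ≤ ‖(B - A) v‖ * ‖v‖ := abs_real_inner_le_norm _ _
      _ ≤ ‖B - A‖ * ‖v‖ * ‖v‖ := by gcongr; exact (B - A).le_opNorm v
      _ ≤ δ * ‖v‖ ^ 2 := by rw [mul_assoc, ← sq]; gcongr
  have hsplit : ⟪B v, v⟫ = ⟪A v, v⟫ + ⟪(B - A) v, v⟫ := by
    rw [sub_apply, inner_sub_left]; ring
  linarith [hA v, neg_abs_le ⟪(B - A) v, v⟫]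

theorem ContDiff.gradient [CompleteSpace H] {n : WithTop ℕ∞} {E : H → ℝ}
    (hE : ContDiff ℝ (n + 1) E) :
    ContDiff ℝ n (gradient E) :=
  (InnerProductSpace.toDual ℝ H).symm.contDiff.comp (hE.fderiv_right le_rfl)

end InnerProduct

theorem stmt_0_general
    {H : Type*} [NormedAddCommGroup H] [InnerProductSpace ℝ H] [CompleteSpace H]
    (E : H → ℝ) (hE : ContDiff ℝ 2 E)
    (x₀ : H) (η σ L : ℝ) (hσ : 0 < σ) (hL : 0 < L)
    (hgrad : ‖gradient E x₀‖ ≤ η)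
    (hstab : ∀ v : H, ⟪fderiv ℝ (gradient E) x₀ v, v⟫ ≥ σ * ‖v‖ ^ 2)
    (hLip : ∀ x ∈ Metric.closedBall x₀ (2 * η / σ), ∀ y ∈ Metric.closedBall x₀ (2 * η / σ),
      ‖fderiv ℝ (gradient E) x - fderiv ℝ (gradient E) y‖ ≤ L * ‖x - y‖)
    (hsmall : 2 * L * η / σ ^ 2 < 1) :
    ∃ xc : H, ‖xc - x₀‖ ≤ 2 * η / σ ∧ gradient E xc = 0 ∧
      ∀ v : H, ⟪fderiv ℝ (gradient E) xc v, v⟫ ≥ (σ - 2 * L * η / σ) * ‖v‖ ^ 2 := by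
  have hη : 0 ≤ η := (norm_nonneg _).trans hgrad
  have hx₀ : x₀ ∈ closedBall x₀ (2 * η / σ) := mem_closedBall_self (by positivity)
  have hG : ∀ x, HasFDerivAt (gradient E) (fderiv ℝ (gradient E) x) x := fun x =>
    ((hE.gradient (n := 1)).differentiable one_ne_zero x).hasFDerivAt
  obtain ⟨A, hA⟩ := exists_continuousLinearEquiv_eq_of_coercive hσ hstab
  have hLipA : ∀ x ∈ closedBall x₀ (2 * η / σ),
      ‖fderiv ℝ (gradient E) x - A‖ ≤ L * ‖x - x₀‖ := fun x hx => hA ▸ hLip x hx x₀ hx₀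
  rw [← hA] at hstab
  obtain ⟨xc, hxc, hzero⟩ := exists_zero_mem_closedBall_of_norm_fderiv_sub_le A hσ hL.le
    (mul_norm_le_norm_apply_of_coercive hstab) hgrad (fun x _ => hG x) hLipA hsmall
  have hxc' : ‖xc - x₀‖ ≤ 2 * η / σ := mem_closedBall_iff_norm.1 hxc
  refine ⟨xc, hxc', hzero, le_inner_apply_self_of_norm_sub_le hstab ?_⟩
  calc ‖fderiv ℝ (gradient E) xc - A‖ ≤ L * ‖xc - x₀‖ := hLipA xc hxc
    _ ≤ L * (2 * η / σ) := by gcongr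
    _ = 2 * L * η / σ := by ring

/-- Quantitative inverse function theorem used to pass from consistency and
stability to existence of equilibria. -/
theorem stmt_0
    {H : Type*} [NormedAddCommGroup H] [InnerProductSpace ℝ H] [CompleteSpace H]
    (E : H → ℝ) (hE : ContDiff ℝ 2 E)
    (x₀ : H) (η σ L : ℝ) (hη : 0 < η) (hσ : 0 < σ) (hL : 0 < L)
    (hgrad : ‖gradient E x₀‖ ≤ η)
    (hstab : ∀ v : H, ⟪fderiv ℝ (gradient E) x₀ v, v⟫ ≥ σ * ‖v‖ ^ 2)
    (hLip : ∀ x ∈ Metric.closedBall x₀ (2 * η / σ), ∀ y ∈ Metric.closedBall x₀ (2 * η / σ),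
      ‖fderiv ℝ (gradient E) x - fderiv ℝ (gradient E) y‖ ≤ L * ‖x - y‖)
    (hsmall : 2 * L * η / σ ^ 2 < 1) :
    ∃ xc : H, ‖xc - x₀‖ ≤ 2 * η / σ ∧ gradient E xc = 0 ∧
      ∀ v : H, ⟪fderiv ℝ (gradient E) xc v, v⟫ ≥ (σ - 2 * L * η / σ) * ‖v‖ ^ 2 :=
  stmt_0_general E hE x₀ η σ L hσ hL hgrad hstab hLip hsmall
end

section
/- Let u be a map from ℝ² (with the Euclidean norm) to ℝ³ (with the Euclidean norm) that is differentiable at every x with ‖x‖ > 1/2 and satisfies ‖fderiv u x‖ ≤ c ‖x‖⁻² log(2 + ‖x‖) for all such x, where c > 0. Then there exists a constant C > 0, depending only on c, such that for every R ≥ 4 and all points x, y with 2R/3 ≤ ‖x‖ ≤ 5R/6 and 2R/3 ≤ ‖y‖ ≤ 5R/6, one has ‖u(x) − u(y)‖ ≤ C R⁻¹ log R. -/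
/-!
On a segment `[x, y]` with `⟪x, y⟫ ≥ 0` whose endpoints have norm at least `2R/3`, every point
has norm at least `√2 R/3`, so the gradient bound gives `‖Du‖ ≤ 9c R⁻² log R` there, and the mean
value inequality over a segment of length at most `5R/3` bounds the oscillation by `15c R⁻¹ log R`.
Two arbitrary points `x, y` of the annulus are joined through a vector `w` of the same norm as `x`,
orthogonal to `x` and with `⟪w, y⟫ ≥ 0`; such a `w` exists because the plane has dimension two.
-/

open RealInnerProductSpace Module

section

variable {E F : Type*} [NormedAddCommGroup E] [InnerProductSpace ℝ E]
  [NormedAddCommGroup F] [NormedSpace ℝ F]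

theorem exists_inner_eq_zero_norm_eq [FiniteDimensional ℝ E] (hE : 2 ≤ finrank ℝ E) (x : E) :
    ∃ v : E, ⟪x, v⟫ = 0 ∧ ‖v‖ = ‖x‖ := by
  have hspan : finrank ℝ (ℝ ∙ x) ≤ 1 := (finrank_span_le_card ({x} : Set E)).trans (by simp)
  have hperp : (ℝ ∙ x)ᗮ ≠ ⊥ := by
    rw [Ne, ← Submodule.finrank_eq_zero]
    have := (ℝ ∙ x).finrank_add_finrank_orthogonal
    omega
  obtain ⟨v, hv, hv0⟩ := Submodule.exists_mem_ne_zero_of_ne_bot hperp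
  refine ⟨(‖x‖ / ‖v‖) • v, ?_, ?_⟩
  · rw [inner_smul_right, Submodule.mem_orthogonal_singleton_iff_inner_right.mp hv, mul_zero]
  · rw [norm_smul, norm_div, norm_norm, norm_norm, div_mul_cancel₀ _ (norm_ne_zero_iff.mpr hv0)]

theorem exists_norm_eq_inner_nonneg [FiniteDimensional ℝ E] (hE : 2 ≤ finrank ℝ E) (x y : E) :
    ∃ w : E, ‖w‖ = ‖x‖ ∧ 0 ≤ ⟪x, w⟫ ∧ 0 ≤ ⟪w, y⟫ := by
  obtain ⟨v, hxv, hv⟩ := exists_inner_eq_zero_norm_eq hE x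
  rcases le_total 0 ⟪v, y⟫ with hvy | hvy
  · exact ⟨v, hv, hxv.ge, hvy⟩
  · refine ⟨-v, by rw [norm_neg, hv], by rw [inner_neg_right, hxv, neg_zero], ?_⟩
    rw [inner_neg_left]
    exact neg_nonneg.mpr hvy

theorem sq_le_two_mul_norm_sq_of_mem_segment {x y z : E} {r : ℝ} (hr : 0 ≤ r)
    (hx : r ≤ ‖x‖) (hy : r ≤ ‖y‖) (hxy : 0 ≤ ⟪x, y⟫) (hz : z ∈ segment ℝ x y) :
    r ^ 2 ≤ 2 * ‖z‖ ^ 2 := by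
  obtain ⟨a, b, ha, hb, hab, rfl⟩ := hz
  have hexpand :
      ‖a • x + b • y‖ ^ 2 = a ^ 2 * ‖x‖ ^ 2 + 2 * (a * b) * ⟪x, y⟫ + b ^ 2 * ‖y‖ ^ 2 := by
    rw [norm_add_sq_real, real_inner_smul_left, real_inner_smul_right, norm_smul, norm_smul,
      Real.norm_eq_abs, Real.norm_eq_abs, mul_pow, mul_pow, sq_abs, sq_abs]
    ring
  have hx2 : r ^ 2 ≤ ‖x‖ ^ 2 := pow_le_pow_left₀ hr hx 2
  have hy2 : r ^ 2 ≤ ‖y‖ ^ 2 := pow_le_pow_left₀ hr hy 2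
  have hsum : 1 ≤ 2 * (a ^ 2 + b ^ 2) := by nlinarith [sq_nonneg (a - b)]
  nlinarith [mul_nonneg (mul_nonneg ha hb) hxy, sq_nonneg a, sq_nonneg b]

theorem norm_le_of_mem_segment {x y z : E} {s : ℝ} (hx : ‖x‖ ≤ s) (hy : ‖y‖ ≤ s)
    (hz : z ∈ segment ℝ x y) : ‖z‖ ≤ s := by
  simpa using
    (convex_closedBall (0 : E) s).segment_subset (by simpa using hx) (by simpa using hy) hz

theorem inv_sq_mul_log_two_add_le {R t : ℝ} (hR : 4 ≤ R) (ht : 0 ≤ t)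
    (hlow : (2 * R / 3) ^ 2 ≤ 2 * t ^ 2) (hup : t ≤ R) :
    (t ^ 2)⁻¹ * Real.log (2 + t) ≤ 9 * (R ^ 2)⁻¹ * Real.log R := by
  have hR0 : 0 < R := by linarith
  have ht2 : 2 * R ^ 2 / 9 ≤ t ^ 2 := by linarith
  have hlog : Real.log (2 + t) ≤ 2 * Real.log R := by
    rw [← Real.log_rpow hR0]
    exact Real.log_le_log (by linarith) (by norm_num; nlinarith)
  calc (t ^ 2)⁻¹ * Real.log (2 + t) ≤ (2 * R ^ 2 / 9)⁻¹ * (2 * Real.log R) :=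
        mul_le_mul (inv_anti₀ (by positivity) ht2) hlog (Real.log_nonneg (by linarith))
          (by positivity)
    _ = 9 * (R ^ 2)⁻¹ * Real.log R := by field_simp

def HasLogDecayingFDeriv (c : ℝ) (u : E → F) : Prop :=
  ∀ x : E, 1 / 2 < ‖x‖ →
    DifferentiableAt ℝ u x ∧ ‖fderiv ℝ u x‖ ≤ c * (‖x‖ ^ 2)⁻¹ * Real.log (2 + ‖x‖)

theorem HasLogDecayingFDeriv.norm_sub_le_of_inner_nonneg {c R : ℝ} {u : E → F}
    (hu : HasLogDecayingFDeriv c u) (hc : 0 ≤ c) (hR : 4 ≤ R) {x y : E}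
    (hx₁ : 2 * R / 3 ≤ ‖x‖) (hx₂ : ‖x‖ ≤ 5 * R / 6)
    (hy₁ : 2 * R / 3 ≤ ‖y‖) (hy₂ : ‖y‖ ≤ 5 * R / 6) (hxy : 0 ≤ ⟪x, y⟫) :
    ‖u x - u y‖ ≤ 15 * c * R⁻¹ * Real.log R := by
  have hR0 : 0 < R := by linarith
  have hlow : ∀ z ∈ segment ℝ x y, (2 * R / 3) ^ 2 ≤ 2 * ‖z‖ ^ 2 := fun z hz =>
    sq_le_two_mul_norm_sq_of_mem_segment (by positivity) hx₁ hy₁ hxy hz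
  have hup : ∀ z ∈ segment ℝ x y, ‖z‖ ≤ R := fun z hz =>
    norm_le_of_mem_segment (by linarith) (by linarith) hz
  have hfar : ∀ z ∈ segment ℝ x y, 1 / 2 < ‖z‖ := by
    intro z hz
    nlinarith [hlow z hz, norm_nonneg z]
  have hderiv : ∀ z ∈ segment ℝ x y, ‖fderiv ℝ u z‖ ≤ c * (9 * (R ^ 2)⁻¹ * Real.log R) := by
    intro z hz
    refine (hu z (hfar z hz)).2.trans ?_
    rw [mul_assoc]
    exact mul_le_mul_of_nonneg_left
      (inv_sq_mul_log_two_add_le hR (norm_nonneg z) (hlow z hz) (hup z hz)) hc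
  have hmvt := (convex_segment x y).norm_image_sub_le_of_norm_fderiv_le
    (fun z hz => (hu z (hfar z hz)).1) hderiv (right_mem_segment ℝ x y) (left_mem_segment ℝ x y)
  have hdist : ‖x - y‖ ≤ 5 * R / 3 := by linarith [norm_sub_le x y]
  calc ‖u x - u y‖ ≤ c * (9 * (R ^ 2)⁻¹ * Real.log R) * (5 * R / 3) :=
        hmvt.trans (mul_le_mul_of_nonneg_left hdist
          (mul_nonneg hc (mul_nonneg (by positivity) (Real.log_nonneg (by linarith)))))
    _ = 15 * c * R⁻¹ * Real.log R := by field_simp; ring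

end

/-- Oscillation bound on the annulus 2R/3 ≤ ‖x‖ ≤ 5R/6 for a field whose
gradient decays like ‖x‖⁻² log‖x‖ (decay (2.2) of dislocation core correctors). -/
theorem stmt_7 (c : ℝ) (hc : 0 < c) :
    ∃ C : ℝ, 0 < C ∧
      ∀ u : EuclideanSpace ℝ (Fin 2) → EuclideanSpace ℝ (Fin 3),
        (∀ x : EuclideanSpace ℝ (Fin 2), 1 / 2 < ‖x‖ →
          DifferentiableAt ℝ u x ∧
          ‖fderiv ℝ u x‖ ≤ c * (‖x‖ ^ 2)⁻¹ * Real.log (2 + ‖x‖)) →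
        ∀ R : ℝ, 4 ≤ R →
          ∀ x y : EuclideanSpace ℝ (Fin 2),
            2 * R / 3 ≤ ‖x‖ → ‖x‖ ≤ 5 * R / 6 →
            2 * R / 3 ≤ ‖y‖ → ‖y‖ ≤ 5 * R / 6 →
            ‖u x - u y‖ ≤ C * R⁻¹ * Real.log R := by
  refine ⟨30 * c, by positivity, fun u hu R hR x y hx₁ hx₂ hy₁ hy₂ => ?_⟩
  obtain ⟨w, hw, hxw, hwy⟩ := exists_norm_eq_inner_nonneg (by simp) x y
  have hux := HasLogDecayingFDeriv.norm_sub_le_of_inner_nonneg hu hc.le hR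
    hx₁ hx₂ (hw ▸ hx₁) (hw ▸ hx₂) hxw
  have huy := HasLogDecayingFDeriv.norm_sub_le_of_inner_nonneg hu hc.le hR
    (hw ▸ hx₁) (hw ▸ hx₂) hy₁ hy₂ hwy
  calc ‖u x - u y‖ ≤ ‖u x - u w‖ + ‖u w - u y‖ := norm_sub_le_norm_sub_add_norm_sub _ _ _
    _ ≤ 30 * c * R⁻¹ * Real.log R := by linarith
end

section
/- Let u be a map from ℝ² (with the Euclidean norm) to ℝ³ (with the Euclidean norm) that is differentiable at every x with ‖x‖ > 1/2 and satisfies ‖fderiv u x‖ ≤ c ‖x‖⁻² log(2 + ‖x‖) there, where c > 0. Let η : ℝ → ℝ be continuously differentiable with 0 ≤ η ≤ 1, η(t) = 1 for t ≤ 2/3 and η(t) = 0 for t ≥ 5/6. For R ≥ 4 define the annulus A_R := {x : 2R/3 ≤ ‖x‖ ≤ 5R/6}, the average a_R := (the Bochner average of u over A_R with respect to Lebesgue measure), and the truncation (Π_R u)(x) := η(‖x‖/R) • (u(x) − a_R). Then there exists C > 0, depending only on c and η, such that for all R ≥ 4: (∫_{‖x‖≥1} ‖fderiv (Π_R u) x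 − fderiv u x‖² dx)^{1/2} ≤ C R⁻¹ log R. -/
/-!
On the annulus `2R/3 ≤ |x| ≤ 5R/6`, where `η(|x|/R)` varies, `|Du| ≲ R⁻² log R`. Any two
points of the annulus are joined by two segments avoiding the ball of radius `R/(3√2)`, so
`u` oscillates by `O(R⁻¹ log R)` there and `|u - a_R| = O(R⁻¹ log R)` on the annulus. The
product rule then gives `|DΠ_R u - Du| ≲ |Du| + R⁻¹ |u - a_R| ≲ R⁻² log R` on the annulus, an
area `O(R²)`. Inside, `Π_R u = u - a_R`; outside, `Π_R u = 0` and
`|Du|² ≲ |x|⁻⁴ log²|x| ≲ R⁻¹ log² R · |x|⁻³`, whose integral over `|x| > 5R/6` is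
`O(R⁻² log² R)`.
-/

open MeasureTheory Metric Set Module
open scoped RealInnerProductSpace

theorem Real.log_two_add_sq_le {ρ r : ℝ} (hρ : 0 < ρ) (hρr : ρ ≤ r) (h1 : 1 ≤ log (2 + ρ)) :
    log (2 + r) ^ 2 ≤ 4 * (r / ρ) * log (2 + ρ) ^ 2 := by
  set s := r / ρ
  have hs : 1 ≤ s := (one_le_div hρ).mpr hρr
  have hsplit : log (2 + r) ≤ log (2 + ρ) + log s := by
    rw [← log_mul (by linarith) (by linarith)]
    refine log_le_log (by linarith) ?_
    have : (2 + ρ) * s = 2 * s + r := by simp only [s]; field_simp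
    nlinarith
  have hsqrt : log s ≤ 2 * (√s - 1) := by
    have := log_le_sub_one_of_pos (sqrt_pos.mpr (by linarith : 0 < s))
    rw [log_sqrt (by linarith)] at this
    linarith
  have hs1 : 1 ≤ √s := one_le_sqrt.mpr hs
  have hle : log (2 + r) ≤ 2 * √s * log (2 + ρ) := by nlinarith
  have h0 : 0 ≤ log (2 + r) := log_nonneg (by linarith)
  calc log (2 + r) ^ 2 ≤ (2 * √s * log (2 + ρ)) ^ 2 := pow_le_pow_left₀ h0 hle 2
    _ = 4 * s * log (2 + ρ) ^ 2 := by rw [mul_pow, mul_pow, sq_sqrt (by linarith)]; ring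

theorem Real.log_two_add_le_two_mul_log {R : ℝ} (hR : 2 ≤ R) : log (2 + R) ≤ 2 * log R := by
  rw [← log_rpow (by linarith)]
  exact log_le_log (by linarith) (by norm_num; nlinarith)

section Annulus

variable {E : Type*} [NormedAddCommGroup E]

def closedAnnulus (r s : ℝ) : Set E := {z | r ≤ ‖z‖ ∧ ‖z‖ ≤ s}

theorem closedAnnulus_subset_closedBall (r s : ℝ) :
    closedAnnulus r s ⊆ closedBall (0 : E) s :=
  fun _ hz => mem_closedBall_zero_iff.mpr hz.2

theorem isClosed_closedAnnulus (r s : ℝ) : IsClosed (closedAnnulus (E := E) r s) :=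
  (isClosed_le continuous_const continuous_norm).inter
    (isClosed_le continuous_norm continuous_const)

theorem isCompact_closedAnnulus [ProperSpace E] (r s : ℝ) :
    IsCompact (closedAnnulus (E := E) r s) :=
  (isCompact_closedBall 0 s).of_isClosed_subset (isClosed_closedAnnulus r s)
    (closedAnnulus_subset_closedBall r s)

variable [NormedSpace ℝ E] [Nontrivial E] [MeasurableSpace E]

theorem measure_closedAnnulus_pos (μ : Measure E) [μ.IsOpenPosMeasure] {r s : ℝ}
    (hr : 0 ≤ r) (hrs : r < s) : 0 < μ (closedAnnulus r s) := by
  obtain ⟨x₀, hx₀⟩ := exists_norm_eq E (show 0 ≤ (r + s) / 2 by linarith)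
  refine (measure_ball_pos μ x₀ (show 0 < (s - r) / 2 by linarith)).trans_le (measure_mono ?_)
  intro z hz
  have := abs_le.mp ((abs_norm_sub_norm_le z x₀).trans (mem_ball_iff_norm.mp hz).le)
  constructor <;> linarith [this.1, this.2]

end Annulus

section Geometry

variable {E : Type*} [NormedAddCommGroup E] [InnerProductSpace ℝ E]

theorem min_sq_norm_le_two_mul_sq_norm_of_mem_segment {a b z : E} (hab : 0 ≤ ⟪a, b⟫)
    (hz : z ∈ segment ℝ a b) : min (‖a‖ ^ 2) (‖b‖ ^ 2) ≤ 2 * ‖z‖ ^ 2 := by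
  obtain ⟨p, q, hp, hq, hpq, rfl⟩ := hz
  have hexpand : ‖p • a + q • b‖ ^ 2
      = p ^ 2 * ‖a‖ ^ 2 + 2 * (p * q) * ⟪a, b⟫ + q ^ 2 * ‖b‖ ^ 2 := by
    rw [norm_add_sq_real, real_inner_smul_left, real_inner_smul_right, norm_smul, norm_smul,
      Real.norm_of_nonneg hp, Real.norm_of_nonneg hq]
    ring
  set m := min (‖a‖ ^ 2) (‖b‖ ^ 2)
  have hm0 : 0 ≤ m := le_min (sq_nonneg _) (sq_nonneg _)
  have hpq2 : 1 ≤ 2 * (p ^ 2 + q ^ 2) := by nlinarith [sq_nonneg (p - q)]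
  rw [hexpand]
  nlinarith [mul_nonneg (mul_nonneg hp hq) hab, mul_le_mul_of_nonneg_right hpq2 hm0,
    mul_le_mul_of_nonneg_left (min_le_left (‖a‖ ^ 2) (‖b‖ ^ 2)) (sq_nonneg p),
    mul_le_mul_of_nonneg_left (min_le_right (‖a‖ ^ 2) (‖b‖ ^ 2)) (sq_nonneg q)]

theorem exists_norm_eq_inner_eq_zero [FiniteDimensional ℝ E] (hE : 2 ≤ finrank ℝ E)
    (x : E) {r : ℝ} (hr : 0 ≤ r) : ∃ v : E, ‖v‖ = r ∧ ⟪x, v⟫ = 0 := by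
  have : Nontrivial (ℝ ∙ x)ᗮ := by
    apply Module.nontrivial_of_finrank_pos (R := ℝ)
    have := (ℝ ∙ x).finrank_add_finrank_orthogonal
    have : finrank ℝ (ℝ ∙ x) ≤ 1 := by simpa using finrank_span_le_card ({x} : Set E)
    omega
  obtain ⟨v, hv⟩ := exists_norm_eq (ℝ ∙ x)ᗮ hr
  exact ⟨v, hv, Submodule.mem_orthogonal_singleton_iff_inner_right.mp v.2⟩

variable {F : Type*} [NormedAddCommGroup F] [NormedSpace ℝ F] {u : E → F} {r s K : ℝ}

theorem norm_image_sub_le_of_inner_nonneg (hr : 0 ≤ r)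
    (hu : ∀ z, r ^ 2 ≤ 2 * ‖z‖ ^ 2 → ‖z‖ ≤ s → DifferentiableAt ℝ u z ∧ ‖fderiv ℝ u z‖ ≤ K)
    {a b : E} (ha : a ∈ closedAnnulus r s) (hb : b ∈ closedAnnulus r s) (hab : 0 ≤ ⟪a, b⟫) :
    ‖u a - u b‖ ≤ 2 * K * s := by
  have hseg : ∀ z ∈ segment ℝ b a, r ^ 2 ≤ 2 * ‖z‖ ^ 2 ∧ ‖z‖ ≤ s := by
    intro z hz
    refine ⟨?_, ?_⟩
    · refine le_trans (le_min ?_ ?_) (min_sq_norm_le_two_mul_sq_norm_of_mem_segment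
        (by rwa [real_inner_comm]) hz)
      · exact pow_le_pow_left₀ hr hb.1 2
      · exact pow_le_pow_left₀ hr ha.1 2
    · have := (convex_closedBall (0 : E) s).segment_subset
        (mem_closedBall_zero_iff.mpr hb.2) (mem_closedBall_zero_iff.mpr ha.2) hz
      exact mem_closedBall_zero_iff.mp this
  have hK : 0 ≤ K := (norm_nonneg _).trans (hu a (hseg a (right_mem_segment ℝ b a)).1 ha.2).2
  calc ‖u a - u b‖ ≤ K * ‖a - b‖ :=
        (convex_segment b a).norm_image_sub_le_of_norm_fderiv_le
          (fun z hz => (hu z (hseg z hz).1 (hseg z hz).2).1)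
          (fun z hz => (hu z (hseg z hz).1 (hseg z hz).2).2)
          (left_mem_segment ℝ b a) (right_mem_segment ℝ b a)
    _ ≤ K * (s + s) := by
        gcongr
        exact (norm_sub_le a b).trans (add_le_add ha.2 hb.2)
    _ = 2 * K * s := by ring

/-- Two points of the annulus are joined through a point orthogonal to the first; both legs are
segments with nonnegative inner product, which stay outside the ball of radius `r / √2`. -/
theorem norm_image_sub_le_of_mem_closedAnnulus [FiniteDimensional ℝ E] (hE : 2 ≤ finrank ℝ E)
    (hr : 0 ≤ r)
    (hu : ∀ z, r ^ 2 ≤ 2 * ‖z‖ ^ 2 → ‖z‖ ≤ s → DifferentiableAt ℝ u z ∧ ‖fderiv ℝ u z‖ ≤ K)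
    {x y : E} (hx : x ∈ closedAnnulus r s) (hy : y ∈ closedAnnulus r s) :
    ‖u x - u y‖ ≤ 4 * K * s := by
  obtain ⟨v, hv, hxv⟩ := exists_norm_eq_inner_eq_zero hE x (norm_nonneg x)
  obtain ⟨p, hp, hxp, hpy⟩ : ∃ p : E, ‖p‖ = ‖x‖ ∧ 0 ≤ ⟪x, p⟫ ∧ 0 ≤ ⟪p, y⟫ := by
    rcases le_total 0 ⟪v, y⟫ with h | h
    · exact ⟨v, hv, hxv.ge, h⟩
    · refine ⟨-v, by rw [norm_neg, hv], by rw [inner_neg_right, hxv, neg_zero], ?_⟩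
      rw [inner_neg_left]
      linarith
  have hpA : p ∈ closedAnnulus r s := ⟨hp ▸ hx.1, hp ▸ hx.2⟩
  calc ‖u x - u y‖ ≤ ‖u x - u p‖ + ‖u p - u y‖ := norm_sub_le_norm_sub_add_norm_sub _ _ _
    _ ≤ 2 * K * s + 2 * K * s := add_le_add (norm_image_sub_le_of_inner_nonneg hr hu hx hpA hxp)
        (norm_image_sub_le_of_inner_nonneg hr hu hpA hy hpy)
    _ = 4 * K * s := by ring

end Geometry

section Average

variable {α F : Type*} [MeasurableSpace α] {μ : Measure α} [NormedAddCommGroup F]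
  [NormedSpace ℝ F] [CompleteSpace F]

theorem norm_sub_setAverage_le {t : Set α} (ht : MeasurableSet t) (h0 : μ t ≠ 0) (hfin : μ t ≠ ⊤)
    {f : α → F} (hf : IntegrableOn f t μ) {y : F} {B : ℝ} (hB : ∀ z ∈ t, ‖y - f z‖ ≤ B) :
    ‖y - ⨍ z in t, f z ∂μ‖ ≤ B := by
  have hmem : ⨍ z in t, f z ∂μ ∈ closedBall y B :=
    (convex_closedBall y B).set_average_mem isClosed_closedBall h0 hfin
      (ae_restrict_of_forall_mem ht fun z hz => by
        rw [mem_closedBall, dist_eq_norm, norm_sub_rev]; exact hB z hz) hf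
  rwa [mem_closedBall, dist_eq_norm, norm_sub_rev] at hmem

end Average

section TailIntegral

variable {E : Type*} [NormedAddCommGroup E]

theorem indicator_compl_closedBall_norm_rpow (a p : ℝ) :
    (closedBall (0 : E) a)ᶜ.indicator (fun x => ‖x‖ ^ (-p))
      = fun x => (Ioi a).indicator (fun t : ℝ => t ^ (-p)) ‖x‖ := by
  ext x
  by_cases hx : a < ‖x‖ <;> simp [indicator, hx]

theorem pow_smul_indicator_Ioi_rpow {n : ℕ} (hn : 1 ≤ n) {a : ℝ} (ha : 0 ≤ a) (p : ℝ) :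
    (fun t : ℝ => t ^ (n - 1) • (Ioi a).indicator (fun t : ℝ => t ^ (-p)) t)
      = (Ioi a).indicator (fun t => t ^ ((n : ℝ) - 1 - p)) := by
  ext t
  by_cases ht : a < t
  · simp only [indicator_of_mem (show t ∈ Ioi a from ht), smul_eq_mul]
    rw [← Real.rpow_natCast, Nat.cast_sub hn, ← Real.rpow_add (ha.trans_lt ht), Nat.cast_one]
    ring_nf
  · simp [indicator_of_notMem (show t ∉ Ioi a from ht)]

variable [NormedSpace ℝ E] [FiniteDimensional ℝ E] [Nontrivial E] [MeasurableSpace E]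
  [BorelSpace E] (μ : Measure E) [μ.IsAddHaarMeasure] {p a : ℝ}

theorem integrableOn_compl_closedBall_norm_rpow (hp : (finrank ℝ E : ℝ) < p) (ha : 0 < a) :
    IntegrableOn (fun x => ‖x‖ ^ (-p)) (closedBall (0 : E) a)ᶜ μ := by
  rw [← integrable_indicator_iff measurableSet_closedBall.compl,
    indicator_compl_closedBall_norm_rpow, integrable_fun_norm_addHaar μ,
    pow_smul_indicator_Ioi_rpow finrank_pos ha.le, IntegrableOn,
    integrable_indicator_iff measurableSet_Ioi, IntegrableOn,
    Measure.restrict_restrict measurableSet_Ioi, inter_eq_left.mpr (Ioi_subset_Ioi ha.le)]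
  exact integrableOn_Ioi_rpow_of_lt (by linarith) ha

theorem integral_compl_closedBall_norm_rpow (hp : (finrank ℝ E : ℝ) < p) (ha : 0 < a) :
    ∫ x in (closedBall (0 : E) a)ᶜ, ‖x‖ ^ (-p) ∂μ
      = finrank ℝ E * μ.real (ball 0 1) * a ^ ((finrank ℝ E : ℝ) - p) / (p - finrank ℝ E) := by
  rw [← integral_indicator measurableSet_closedBall.compl,
    indicator_compl_closedBall_norm_rpow, integral_fun_norm_addHaar μ,
    pow_smul_indicator_Ioi_rpow finrank_pos ha.le, integral_indicator measurableSet_Ioi,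
    Measure.restrict_restrict measurableSet_Ioi, inter_eq_left.mpr (Ioi_subset_Ioi ha.le),
    integral_Ioi_rpow_of_lt (by linarith) ha, nsmul_eq_mul, smul_eq_mul,
    show (finrank ℝ E : ℝ) - 1 - p + 1 = finrank ℝ E - p by ring, neg_div, ← div_neg, neg_sub]
  ring

end TailIntegral

section RadialTruncation

variable {E F : Type*} [NormedAddCommGroup E] [NormedAddCommGroup F] [NormedSpace ℝ F]
  {η : ℝ → ℝ} {R : ℝ} {u : E → F} {a : F} {x : E}

/-- `Π_R u` of the paper, with `a` standing for the annulus average `a_R`. -/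
noncomputable def radialTruncation (η : ℝ → ℝ) (R : ℝ) (u : E → F) (a : F) : E → F :=
  fun y => η (‖y‖ / R) • (u y - a)

variable [NormedSpace ℝ E]

theorem fderiv_radialTruncation_of_norm_lt {α : ℝ} (hη : ∀ t ≤ α, η t = 1) (hR : 0 < R)
    (hx : ‖x‖ < α * R) : fderiv ℝ (radialTruncation η R u a) x = fderiv ℝ u x := by
  have hev : radialTruncation η R u a =ᶠ[nhds x] fun y => u y - a := by
    filter_upwards [(isOpen_lt continuous_norm continuous_const).mem_nhds hx] with y hy
    rw [radialTruncation, hη _ ((div_le_iff₀ hR).mpr (le_of_lt hy)), one_smul]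
  rw [hev.fderiv_eq, fderiv_sub_const]

theorem fderiv_radialTruncation_of_lt_norm {β : ℝ} (hη : ∀ t, β ≤ t → η t = 0) (hR : 0 < R)
    (hx : β * R < ‖x‖) : fderiv ℝ (radialTruncation η R u a) x = 0 := by
  have hev : radialTruncation η R u a =ᶠ[nhds x] fun _ => 0 := by
    filter_upwards [(isOpen_lt continuous_const continuous_norm).mem_nhds hx] with y hy
    rw [radialTruncation, hη _ ((le_div_iff₀ hR).mpr (le_of_lt hy)), zero_smul]
  rw [hev.fderiv_eq, fderiv_const_apply]

theorem norm_fderiv_smul_sub_sub_fderiv_le {φ : E → ℝ} {g : E → F} {x : E}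
    (hφ : DifferentiableAt ℝ φ x) (hg : DifferentiableAt ℝ g x) (a : F) :
    ‖fderiv ℝ (fun y => φ y • (g y - a)) x - fderiv ℝ g x‖
      ≤ |φ x - 1| * ‖fderiv ℝ g x‖ + ‖fderiv ℝ φ x‖ * ‖g x - a‖ := by
  rw [fderiv_fun_smul hφ (hg.sub_const a), fderiv_sub_const,
    show φ x • fderiv ℝ g x + (fderiv ℝ φ x).smulRight (g x - a) - fderiv ℝ g x
      = (φ x - 1) • fderiv ℝ g x + (fderiv ℝ φ x).smulRight (g x - a) by
      rw [sub_smul, one_smul]; abel]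
  refine (norm_add_le _ _).trans_eq ?_
  rw [norm_smul, Real.norm_eq_abs, ContinuousLinearMap.norm_smulRight_apply]

end RadialTruncation

section RadialTruncationInner

variable {E F : Type*} [NormedAddCommGroup E] [InnerProductSpace ℝ E] [NormedAddCommGroup F]
  [NormedSpace ℝ F] {η : ℝ → ℝ} {R : ℝ}

theorem hasFDerivAt_comp_norm_div {x : E} (hx : x ≠ 0)
    (hη : DifferentiableAt ℝ η (‖x‖ / R)) :
    HasFDerivAt (fun y : E => η (‖y‖ / R)) (deriv η (‖x‖ / R) • R⁻¹ • fderiv ℝ (‖·‖) x) x := by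
  have hN : HasFDerivAt (fun y : E => ‖y‖ / R) (R⁻¹ • fderiv ℝ (‖·‖) x) x := by
    simpa [div_eq_inv_mul, Pi.smul_def] using
      ((contDiffAt_norm ℝ hx).differentiableAt one_ne_zero).hasFDerivAt.const_smul R⁻¹
  exact hη.hasDerivAt.comp_hasFDerivAt x hN

theorem norm_fderiv_comp_norm_div (hR : 0 < R) {x : E} (hx : x ≠ 0)
    (hη : DifferentiableAt ℝ η (‖x‖ / R)) :
    ‖fderiv ℝ (fun y : E => η (‖y‖ / R)) x‖ = |deriv η (‖x‖ / R)| / R := by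
  have : Nontrivial E := ⟨⟨x, 0, hx⟩⟩
  rw [(hasFDerivAt_comp_norm_div hx hη).fderiv, norm_smul, norm_smul,
    norm_fderiv_norm ((contDiffAt_norm ℝ hx).differentiableAt one_ne_zero), Real.norm_eq_abs,
    Real.norm_eq_abs, abs_inv, abs_of_pos hR, mul_one]
  exact (div_eq_mul_inv _ _).symm

theorem norm_fderiv_radialTruncation_sub_le {u : E → F} {a : F} {x : E} {M : ℝ}
    (hη : DifferentiableAt ℝ η (‖x‖ / R)) (hη0 : 0 ≤ η (‖x‖ / R)) (hη1 : η (‖x‖ / R) ≤ 1)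
    (hM : |deriv η (‖x‖ / R)| ≤ M) (hR : 0 < R) (hx : x ≠ 0) (hu : DifferentiableAt ℝ u x) :
    ‖fderiv ℝ (radialTruncation η R u a) x - fderiv ℝ u x‖
      ≤ ‖fderiv ℝ u x‖ + M / R * ‖u x - a‖ := by
  refine (norm_fderiv_smul_sub_sub_fderiv_le
    (hasFDerivAt_comp_norm_div hx hη).differentiableAt hu a).trans ?_
  gcongr
  · exact (mul_le_of_le_one_left (norm_nonneg _) (abs_le.mpr ⟨by linarith, by linarith⟩))
  · exact (norm_fderiv_comp_norm_div hR hx hη).trans_le (by gcongr)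

end RadialTruncationInner

section Decay

variable {E F : Type*} [NormedAddCommGroup E] [InnerProductSpace ℝ E] [NormedAddCommGroup F]
  [NormedSpace ℝ F] {c R : ℝ} {u : E → F}

def FDerivDecay (c : ℝ) (u : E → F) : Prop :=
  ∀ x : E, 1 / 2 < ‖x‖ →
    DifferentiableAt ℝ u x ∧ ‖fderiv ℝ u x‖ ≤ c * (‖x‖ ^ 2)⁻¹ * Real.log (2 + ‖x‖)

namespace FDerivDecay

theorem norm_sub_le_of_mem_closedAnnulus [FiniteDimensional ℝ E] (hE : 2 ≤ finrank ℝ E)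
    (hc : 0 ≤ c) (hu : FDerivDecay c u) (hR : 4 ≤ R) {x y : E}
    (hx : x ∈ closedAnnulus (2 * R / 3) (5 * R / 6))
    (hy : y ∈ closedAnnulus (2 * R / 3) (5 * R / 6)) :
    ‖u x - u y‖ ≤ 15 * c * Real.log (2 + R) / R := by
  have hbound : ∀ z : E, (2 * R / 3) ^ 2 ≤ 2 * ‖z‖ ^ 2 → ‖z‖ ≤ 5 * R / 6 →
      DifferentiableAt ℝ u z ∧ ‖fderiv ℝ u z‖ ≤ c * (2 * R ^ 2 / 9)⁻¹ * Real.log (2 + R) := by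
    intro z hz₁ hz₂
    have hz : 2 * R ^ 2 / 9 ≤ ‖z‖ ^ 2 := by linarith
    have hhalf : 1 / 2 < ‖z‖ := by nlinarith [norm_nonneg z]
    refine ⟨(hu z hhalf).1, (hu z hhalf).2.trans ?_⟩
    gcongr
    · exact Real.log_nonneg (by linarith)
    · linarith
  calc ‖u x - u y‖ ≤ 4 * (c * (2 * R ^ 2 / 9)⁻¹ * Real.log (2 + R)) * (5 * R / 6) :=
        norm_image_sub_le_of_mem_closedAnnulus hE (by linarith) hbound hx hy
    _ = 15 * c * Real.log (2 + R) / R := by field_simp; ring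

theorem norm_sub_setAverage_closedAnnulus_le [CompleteSpace F] [FiniteDimensional ℝ E]
    [MeasurableSpace E] [BorelSpace E] (μ : Measure E) [μ.IsAddHaarMeasure]
    (hE : 2 ≤ finrank ℝ E) (hc : 0 ≤ c) (hu : FDerivDecay c u) (hR : 4 ≤ R) {x : E}
    (hx : x ∈ closedAnnulus (2 * R / 3) (5 * R / 6)) :
    ‖u x - ⨍ z in closedAnnulus (2 * R / 3) (5 * R / 6), u z ∂μ‖ ≤ 30 * c * Real.log R / R := by
  have : Nontrivial E := Module.nontrivial_of_finrank_pos (R := ℝ) (by omega)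
  have hcont : ContinuousOn u (closedAnnulus (2 * R / 3) (5 * R / 6)) := fun z hz =>
    (hu z (by linarith [hz.1])).1.continuousAt.continuousWithinAt
  refine (norm_sub_setAverage_le (isClosed_closedAnnulus _ _).measurableSet
    (measure_closedAnnulus_pos μ (by linarith) (by linarith)).ne'
    ((measure_mono (closedAnnulus_subset_closedBall _ _)).trans_lt measure_closedBall_lt_top).ne
    (hcont.integrableOn_compact (isCompact_closedAnnulus _ _))
    fun z hz => hu.norm_sub_le_of_mem_closedAnnulus hE hc hR hx hz).trans ?_
  have := Real.log_two_add_le_two_mul_log (by linarith : 2 ≤ R)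
  rw [div_le_div_iff_of_pos_right (by linarith)]
  nlinarith

/-- Trading `log²` for one power of `‖x‖` leaves `‖x‖⁻³`, integrable outside a ball in the
plane. -/
theorem sq_norm_fderiv_le (hu : FDerivDecay c u) (hR : 4 ≤ R) {x : E}
    (hx : 5 * R / 6 < ‖x‖) :
    ‖fderiv ℝ u x‖ ^ 2 ≤ 20 * c ^ 2 * Real.log R ^ 2 / R * ‖x‖ ^ (-3 : ℝ) := by
  have hx0 : 0 < ‖x‖ := by linarith
  have hlogρ : Real.log (2 + 5 * R / 6) ≤ 2 * Real.log R :=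
    (Real.log_le_log (by linarith) (by linarith)).trans
      (Real.log_two_add_le_two_mul_log (by linarith))
  have hlog := Real.log_two_add_sq_le (by linarith) hx.le (by
    rw [Real.le_log_iff_exp_le (by linarith)]; linarith [Real.exp_one_lt_d9])
  have hlog' : Real.log (2 + ‖x‖) ^ 2 ≤ 20 * (Real.log R ^ 2 / R * ‖x‖) := by
    have h0 : 0 ≤ Real.log (2 + 5 * R / 6) := Real.log_nonneg (by linarith)
    have : 0 ≤ Real.log R ^ 2 / R * ‖x‖ := by positivity
    calc _ ≤ 4 * (‖x‖ / (5 * R / 6)) * (2 * Real.log R) ^ 2 := hlog.trans (by gcongr)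
      _ = 96 / 5 * (Real.log R ^ 2 / R * ‖x‖) := by field_simp; ring
      _ ≤ 20 * (Real.log R ^ 2 / R * ‖x‖) := by linarith
  have hDu := pow_le_pow_left₀ (norm_nonneg _) (hu x (by linarith)).2 2
  refine hDu.trans ?_
  rw [Real.rpow_neg hx0.le, show (3 : ℝ) = ((3 : ℕ) : ℝ) by norm_num, Real.rpow_natCast]
  calc (c * (‖x‖ ^ 2)⁻¹ * Real.log (2 + ‖x‖)) ^ 2
      = c ^ 2 * (‖x‖ ^ 4)⁻¹ * Real.log (2 + ‖x‖) ^ 2 := by ring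
    _ ≤ c ^ 2 * (‖x‖ ^ 4)⁻¹ * (20 * (Real.log R ^ 2 / R * ‖x‖)) := by gcongr
    _ = 20 * c ^ 2 * Real.log R ^ 2 / R * (‖x‖ ^ 3)⁻¹ := by field_simp

theorem sq_norm_fderiv_radialTruncation_sub_le {η : ℝ → ℝ} {M : ℝ} {a : F} (hc : 0 ≤ c)
    (hu : FDerivDecay c u) (hη : Differentiable ℝ η) (hη0 : ∀ t, 0 ≤ η t) (hη1 : ∀ t, η t ≤ 1)
    (hηlo : ∀ t : ℝ, t ≤ 2 / 3 → η t = 1) (hηhi : ∀ t : ℝ, 5 / 6 ≤ t → η t = 0)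
    (hM : ∀ t ∈ Icc (2 / 3 : ℝ) (5 / 6), |deriv η t| ≤ M) (hR : 4 ≤ R)
    (ha : ∀ x ∈ closedAnnulus (2 * R / 3) (5 * R / 6), ‖u x - a‖ ≤ 30 * c * Real.log R / R)
    (x : E) :
    ‖fderiv ℝ (radialTruncation η R u a) x - fderiv ℝ u x‖ ^ 2
      ≤ (closedBall (0 : E) (5 * R / 6)).indicator
          (fun _ => ((9 / 2 + 30 * M) * c * Real.log R / R ^ 2) ^ 2) x
        + 20 * c ^ 2 * Real.log R ^ 2 / R *
          (closedBall (0 : E) (5 * R / 6))ᶜ.indicator (fun y => ‖y‖ ^ (-3 : ℝ)) x := by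
  have hR0 : 0 < R := by linarith
  have hlogR : 0 ≤ Real.log R := Real.log_nonneg (by linarith)
  rcases le_or_gt ‖x‖ (5 * R / 6) with hx₂ | hx₂
  · rw [indicator_of_mem (mem_closedBall_zero_iff.mpr hx₂),
      indicator_of_notMem (not_not.mpr (mem_closedBall_zero_iff.mpr hx₂)), mul_zero, add_zero]
    rcases lt_or_ge ‖x‖ (2 * R / 3) with hx₁ | hx₁
    · rw [fderiv_radialTruncation_of_norm_lt hηlo hR0 (by linarith), sub_self, norm_zero,
        zero_pow two_ne_zero]
      exact sq_nonneg _
    refine pow_le_pow_left₀ (norm_nonneg _) ?_ 2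
    have hx0 : x ≠ 0 := norm_pos_iff.mp (by linarith)
    have hxR : ‖x‖ / R ∈ Icc (2 / 3 : ℝ) (5 / 6) :=
      ⟨(le_div_iff₀ hR0).mpr (by linarith), (div_le_iff₀ hR0).mpr (by linarith)⟩
    have hDu : ‖fderiv ℝ u x‖ ≤ 9 / 2 * c * Real.log R / R ^ 2 := by
      refine (hu x (by linarith)).2.trans ?_
      calc c * (‖x‖ ^ 2)⁻¹ * Real.log (2 + ‖x‖) ≤ c * ((2 * R / 3) ^ 2)⁻¹ * (2 * Real.log R) := by
            gcongr
            · exact Real.log_nonneg (by linarith)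
            · exact (Real.log_le_log (by positivity) (by linarith)).trans
                (Real.log_two_add_le_two_mul_log (by linarith))
        _ = 9 / 2 * c * Real.log R / R ^ 2 := by field_simp; ring
    have hM0 : 0 ≤ M := (abs_nonneg _).trans (hM _ hxR)
    calc ‖fderiv ℝ (radialTruncation η R u a) x - fderiv ℝ u x‖
        ≤ ‖fderiv ℝ u x‖ + M / R * ‖u x - a‖ :=
          norm_fderiv_radialTruncation_sub_le (hη _) (hη0 _) (hη1 _) (hM _ hxR) hR0 hx0
            (hu x (by linarith)).1
      _ ≤ 9 / 2 * c * Real.log R / R ^ 2 + M / R * (30 * c * Real.log R / R) := by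
          gcongr
          exact ha x ⟨hx₁, hx₂⟩
      _ = (9 / 2 + 30 * M) * c * Real.log R / R ^ 2 := by field_simp
  · rw [indicator_of_notMem (by simpa using hx₂),
      indicator_of_mem (by simpa using hx₂), zero_add,
      fderiv_radialTruncation_of_lt_norm hηhi hR0 (by linarith), zero_sub, norm_neg]
    exact hu.sq_norm_fderiv_le hR hx₂

theorem setIntegral_sq_norm_fderiv_radialTruncation_sub_le [CompleteSpace F]
    [FiniteDimensional ℝ E] [MeasurableSpace E] [BorelSpace E] (μ : Measure E)
    [μ.IsAddHaarMeasure] (hE : finrank ℝ E = 2) {η : ℝ → ℝ} {M : ℝ} (hc : 0 ≤ c)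
    (hu : FDerivDecay c u) (hη : Differentiable ℝ η) (hη0 : ∀ t, 0 ≤ η t) (hη1 : ∀ t, η t ≤ 1)
    (hηlo : ∀ t : ℝ, t ≤ 2 / 3 → η t = 1) (hηhi : ∀ t : ℝ, 5 / 6 ≤ t → η t = 0)
    (hM : ∀ t ∈ Icc (2 / 3 : ℝ) (5 / 6), |deriv η t| ≤ M) (hR : 4 ≤ R) (s : Set E) :
    ∫ x in s, ‖fderiv ℝ (radialTruncation η R u
        (⨍ z in closedAnnulus (2 * R / 3) (5 * R / 6), u z ∂μ)) x - fderiv ℝ u x‖ ^ 2 ∂μ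
      ≤ μ.real (ball 0 1) * (25 / 36 * ((9 / 2 + 30 * M) * c) ^ 2 + 48 * c ^ 2)
        * (Real.log R / R) ^ 2 := by
  have : Nontrivial E := Module.nontrivial_of_finrank_pos (R := ℝ) (by omega)
  have hR0 : 0 < R := by linarith
  set β := (9 / 2 + 30 * M) * c * Real.log R / R ^ 2
  set γ := 20 * c ^ 2 * Real.log R ^ 2 / R
  set B : Set E := closedBall 0 (5 * R / 6)
  set G : E → ℝ := fun x => B.indicator (fun _ => β ^ 2) x + γ * Bᶜ.indicator (‖·‖ ^ (-3 : ℝ)) x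
  have hp : (finrank ℝ E : ℝ) < 3 := by rw [hE]; norm_num
  have hint₁ : Integrable (B.indicator fun _ => β ^ 2) μ :=
    (integrableOn_const measure_closedBall_lt_top.ne).integrable_indicator
      measurableSet_closedBall
  have hint₂ : Integrable (Bᶜ.indicator (‖·‖ ^ (-3 : ℝ))) μ :=
    (integrableOn_compl_closedBall_norm_rpow μ hp (by linarith)).integrable_indicator
      measurableSet_closedBall.compl
  have hG : Integrable G μ := hint₁.add (hint₂.const_mul γ)
  have hG0 : ∀ x, 0 ≤ G x := fun x =>
    add_nonneg (indicator_nonneg (fun _ _ => sq_nonneg β) x)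
      (mul_nonneg (by positivity) (indicator_nonneg (fun y _ => by positivity) x))
  have hpt := fun x => hu.sq_norm_fderiv_radialTruncation_sub_le hc hη hη0 hη1 hηlo hηhi hM hR
    (fun x hx => hu.norm_sub_setAverage_closedAnnulus_le μ (by omega) hc hR hx) x
  calc _ ≤ ∫ x in s, G x ∂μ :=
        integral_mono_of_nonneg (ae_of_all _ fun _ => sq_nonneg _) hG.integrableOn (ae_of_all _ hpt)
    _ ≤ ∫ x, G x ∂μ := setIntegral_le_integral hG (ae_of_all _ hG0)
    _ = μ.real B * β ^ 2 + γ * ∫ x in Bᶜ, ‖x‖ ^ (-3 : ℝ) ∂μ := by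
        rw [integral_add hint₁ (hint₂.const_mul γ), integral_const_mul,
          integral_indicator measurableSet_closedBall, setIntegral_const, smul_eq_mul,
          integral_indicator measurableSet_closedBall.compl]
    _ = _ := by
        rw [integral_compl_closedBall_norm_rpow μ hp (by linarith),
          Measure.addHaar_real_closedBall μ 0 (by linarith), hE]
        norm_num [Real.rpow_neg_one, β, γ]
        field_simp
        ring

end FDerivDecay

end Decay

/-- Continuum form of the truncation-operator estimate (2.3): for a core
corrector with the generic decay (2.2), the truncation Π_R changes the energy
norm only by O(R⁻¹ log R). -/
theorem stmt_8 (c : ℝ) (hc : 0 < c) (η : ℝ → ℝ)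
    (hη : ContDiff ℝ 1 η) (hη0 : ∀ t, 0 ≤ η t) (hη1 : ∀ t, η t ≤ 1)
    (hηlo : ∀ t : ℝ, t ≤ 2 / 3 → η t = 1) (hηhi : ∀ t : ℝ, 5 / 6 ≤ t → η t = 0) :
    ∃ C : ℝ, 0 < C ∧
      ∀ u : EuclideanSpace ℝ (Fin 2) → EuclideanSpace ℝ (Fin 3),
        (∀ x : EuclideanSpace ℝ (Fin 2), 1 / 2 < ‖x‖ →
          DifferentiableAt ℝ u x ∧
          ‖fderiv ℝ u x‖ ≤ c * (‖x‖ ^ 2)⁻¹ * Real.log (2 + ‖x‖)) →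
        ∀ R : ℝ, 4 ≤ R →
          Real.sqrt (∫ x in {x : EuclideanSpace ℝ (Fin 2) | 1 ≤ ‖x‖},
              ‖fderiv ℝ (fun y : EuclideanSpace ℝ (Fin 2) =>
                  η (‖y‖ / R) • (u y -
                    ⨍ z in {z : EuclideanSpace ℝ (Fin 2) |
                        2 * R / 3 ≤ ‖z‖ ∧ ‖z‖ ≤ 5 * R / 6}, u z)) x
                - fderiv ℝ u x‖ ^ 2)
            ≤ C * R⁻¹ * Real.log R := by
  obtain ⟨M, hM⟩ := isCompact_Icc.exists_bound_of_continuousOn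
    (hη.continuous_deriv le_rfl).continuousOn
  set D := (volume : Measure (EuclideanSpace ℝ (Fin 2))).real (ball 0 1)
    * (25 / 36 * ((9 / 2 + 30 * M) * c) ^ 2 + 48 * c ^ 2)
  refine ⟨√D + 1, by positivity, fun u hu R hR => ?_⟩
  have hlog : 0 ≤ Real.log R / R := div_nonneg (Real.log_nonneg (by linarith)) (by linarith)
  calc _ ≤ √(D * (Real.log R / R) ^ 2) := Real.sqrt_le_sqrt
        (FDerivDecay.setIntegral_sq_norm_fderiv_radialTruncation_sub_le volume
          finrank_euclideanSpace_fin hc.le hu (hη.differentiable one_ne_zero) hη0 hη1 hηlo hηhi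
          (fun t ht => by simpa using hM t ht) hR _)
    _ = √D * (Real.log R / R) := by rw [Real.sqrt_mul' _ (sq_nonneg _), Real.sqrt_sq hlog]
    _ ≤ (√D + 1) * R⁻¹ * Real.log R := by
        rw [mul_assoc, inv_mul_eq_div]
        exact mul_le_mul_of_nonneg_right (le_add_of_nonneg_right zero_le_one) hlog
end

section
/- Let u : ℤ × ℤ → ℝ³ (ℝ³ carrying the Euclidean norm) satisfy, for every ℓ ∈ ℤ × ℤ with ℓ ≠ (0,0) and every ρ ∈ {(1,0), (−1,0), (0,1), (0,−1)}: ‖u(ℓ + ρ) − u(ℓ)‖ ≤ c (1 + |ℓ|)⁻² log(2 + |ℓ|), where c > 0. Then there exist constants C > 0 and R₀ ≥ 4, with C depending only on c, such that for every R ≥ R₀ and all lattice points ℓ, m with 2R/3 ≤ |ℓ| ≤ 5R/6 and 2R/3 ≤ |m| ≤ 5R/6, one has ‖u(ℓ) − u(m)‖ ≤ C R⁻¹ log R. -/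
/-- Euclidean norm of a point of the lattice ℤ × ℤ viewed as a point of ℝ². -/
noncomputable def latNorm (ℓ : ℤ × ℤ) : ℝ := Real.sqrt ((ℓ.1 : ℝ) ^ 2 + (ℓ.2 : ℝ) ^ 2)

lemma latNorm_nonneg (p : ℤ × ℤ) : 0 ≤ latNorm p := Real.sqrt_nonneg _

lemma latNorm_le {p : ℤ × ℤ} {M : ℝ} (hM : 0 ≤ M)
    (h : ((p.1 : ℝ)) ^ 2 + ((p.2 : ℝ)) ^ 2 ≤ M ^ 2) : latNorm p ≤ M := by
  rw [latNorm, show M = Real.sqrt (M ^ 2) by rw [Real.sqrt_sq hM]]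
  exact Real.sqrt_le_sqrt h

lemma le_latNorm {p : ℤ × ℤ} {M : ℝ} (hM : 0 ≤ M)
    (h : M ^ 2 ≤ ((p.1 : ℝ)) ^ 2 + ((p.2 : ℝ)) ^ 2) : M ≤ latNorm p := by
  rw [latNorm, show M = Real.sqrt (M ^ 2) by rw [Real.sqrt_sq hM]]
  exact Real.sqrt_le_sqrt h

lemma latNorm_mono {p q : ℤ × ℤ}
    (h : ((p.1 : ℝ)) ^ 2 + ((p.2 : ℝ)) ^ 2 ≤ ((q.1 : ℝ)) ^ 2 + ((q.2 : ℝ)) ^ 2) :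
    latNorm p ≤ latNorm q := Real.sqrt_le_sqrt h

lemma latNorm_zero : latNorm (0, 0) = 0 := by simp [latNorm]

lemma abs_fst_le_latNorm (p : ℤ × ℤ) : |(p.1 : ℝ)| ≤ latNorm p := by
  rw [← Real.sqrt_sq_eq_abs]
  exact Real.sqrt_le_sqrt (by nlinarith [sq_nonneg ((p.2 : ℝ))])

lemma abs_snd_le_latNorm (p : ℤ × ℤ) : |(p.2 : ℝ)| ≤ latNorm p := by
  rw [← Real.sqrt_sq_eq_abs]
  exact Real.sqrt_le_sqrt (by nlinarith [sq_nonneg ((p.1 : ℝ))])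

lemma seg (u : ℤ × ℤ → EuclideanSpace ℝ (Fin 3)) (Good : ℤ × ℤ → Prop) (K : ℝ) (ρ : ℤ × ℤ)
    (h : ∀ p, Good p → ‖u (p + ρ) - u p‖ ≤ K) :
    ∀ (p : ℤ × ℤ) (n : ℕ), (∀ k < n, Good (p + k • ρ)) →
      ‖u (p + n • ρ) - u p‖ ≤ n * K := by
  intro p n
  induction n with
  | zero => simp
  | succ n ih =>
    intro hg
    have h1 := ih (fun k hk => hg k (by omega))
    have h2 := h (p + n • ρ) (hg n (by omega))
    have e : p + (n + 1) • ρ = (p + n • ρ) + ρ := by rw [succ_nsmul]; rw [add_assoc]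
    rw [← e] at h2
    have tri := norm_sub_le_norm_sub_add_norm_sub (u (p + (n+1) • ρ)) (u (p + n • ρ)) (u p)
    push_cast
    linarith

set_option maxHeartbeats 2000000 in
lemma reach (u : ℤ × ℤ → EuclideanSpace ℝ (Fin 3)) (R : ℝ) (hR : 4 ≤ R) (K : ℝ) (hK0 : 0 ≤ K)
    (N : ℤ) (hN : R ≤ (N : ℝ)) (hN2 : (N : ℝ) ≤ R + 1)
    (h : ∀ p : ℤ × ℤ, 2 * R / 3 ≤ latNorm p → latNorm p ≤ 2 * R →
        ∀ ρ ∈ ({(1, 0), (-1, 0), (0, 1), (0, -1)} : Set (ℤ × ℤ)),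
          ‖u (p + ρ) - u p‖ ≤ K)
    (ℓ : ℤ × ℤ) (hl1 : 2 * R / 3 ≤ latNorm ℓ) (hl2 : latNorm ℓ ≤ 5 * R / 6) :
    ‖u ℓ - u (N, N)‖ ≤ 6 * (N : ℝ) * K := by
  obtain ⟨a, b⟩ := ℓ
  set Good : ℤ × ℤ → Prop := fun q => 2 * R / 3 ≤ latNorm q ∧ latNorm q ≤ 2 * R with hGood
  have hE : ∀ ρ ∈ ({(1, 0), (-1, 0), (0, 1), (0, -1)} : Set (ℤ × ℤ)),
      ∀ p, Good p → ‖u (p + ρ) - u p‖ ≤ K := fun ρ hρ p hp => h p hp.1 hp.2 ρ hρ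
  have hsegE := fun (ρ : ℤ × ℤ) (hρ) => seg u Good K ρ (hE ρ hρ)
  have haR : |(a : ℝ)| ≤ 5 * R / 6 := (abs_fst_le_latNorm (a, b)).trans hl2
  have hbR : |(b : ℝ)| ≤ 5 * R / 6 := (abs_snd_le_latNorm (a, b)).trans hl2
  have haN : -N ≤ a ∧ a ≤ N := by
    constructor <;> [exact_mod_cast (by cases abs_le.mp haR; linarith : -(N:ℝ) ≤ a);
      exact_mod_cast (by cases abs_le.mp haR; linarith : (a:ℝ) ≤ N)]
  have hbN : -N ≤ b ∧ b ≤ N := by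
    constructor <;> [exact_mod_cast (by cases abs_le.mp hbR; linarith : -(N:ℝ) ≤ b);
      exact_mod_cast (by cases abs_le.mp hbR; linarith : (b:ℝ) ≤ N)]
  have hN0 : (0 : ℝ) ≤ N := by linarith
  have hup : ∀ q : ℤ × ℤ, |(q.1 : ℝ)| ≤ N → |(q.2 : ℝ)| ≤ N → latNorm q ≤ 2 * R := by
    intro q h1 h2
    refine latNorm_le (by linarith) ?_
    have e1 := mul_self_le_mul_self (abs_nonneg (q.1 : ℝ)) h1
    have e2 := mul_self_le_mul_self (abs_nonneg (q.2 : ℝ)) h2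
    have s1 := sq_abs (q.1 : ℝ); have s2 := sq_abs (q.2 : ℝ)
    nlinarith
  have hNgood : ∀ q : ℤ × ℤ, (|(q.1 : ℝ)| = N ∨ |(q.2 : ℝ)| = N) →
      |(q.1 : ℝ)| ≤ N → |(q.2 : ℝ)| ≤ N → Good q := by
    intro q hq h1 h2
    refine ⟨?_, hup q h1 h2⟩
    rcases hq with hq | hq
    · have := abs_fst_le_latNorm q; rw [hq] at this; linarith
    · have := abs_snd_le_latNorm q; rw [hq] at this; linarith
  have habs : |(N : ℝ)| = N := abs_of_nonneg hN0
  -- casts of coordinates of path points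
  have pt1 : ∀ (x y : ℤ) (k : ℕ), ((x, y) : ℤ × ℤ) + k • ((1 : ℤ), (0 : ℤ)) = (x + k, y) := by
    intro x y k; simp [Prod.ext_iff]
  have ptm1 : ∀ (x y : ℤ) (k : ℕ), ((x, y) : ℤ × ℤ) + k • ((-1 : ℤ), (0 : ℤ)) = (x - k, y) := by
    intro x y k; simp [Prod.ext_iff]; ring
  have pt2 : ∀ (x y : ℤ) (k : ℕ), ((x, y) : ℤ × ℤ) + k • ((0 : ℤ), (1 : ℤ)) = (x, y + k) := by
    intro x y k; simp [Prod.ext_iff]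
  have hseg_right : ∀ x y x' : ℤ, x ≤ x' → (∀ t : ℤ, x ≤ t → t < x' → Good (t, y)) →
      ‖u (x', y) - u (x, y)‖ ≤ ((x' - x : ℤ) : ℝ) * K := by
    intro x y x' hxx hg
    have hn : ((x' - x).toNat : ℤ) = x' - x := Int.toNat_of_nonneg (by omega)
    have hgood : ∀ k < (x' - x).toNat, Good (((x, y) : ℤ × ℤ) + k • ((1 : ℤ), (0 : ℤ))) := by
      intro k hk; rw [pt1]; exact hg _ (by omega) (by omega)
    have hb := hsegE (1, 0) (by simp) (x, y) (x' - x).toNat hgood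
    rw [pt1, show x + ((x' - x).toNat : ℤ) = x' by omega] at hb
    have hcast : (((x' - x).toNat : ℕ) : ℝ) = ((x' - x : ℤ) : ℝ) := by exact_mod_cast hn
    rwa [hcast] at hb
  have hseg_left : ∀ x y x' : ℤ, x' ≤ x → (∀ t : ℤ, x' < t → t ≤ x → Good (t, y)) →
      ‖u (x', y) - u (x, y)‖ ≤ ((x - x' : ℤ) : ℝ) * K := by
    intro x y x' hxx hg
    have hn : ((x - x').toNat : ℤ) = x - x' := Int.toNat_of_nonneg (by omega)
    have hgood : ∀ k < (x - x').toNat, Good (((x, y) : ℤ × ℤ) + k • ((-1 : ℤ), (0 : ℤ))) := by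
      intro k hk; rw [ptm1]; exact hg _ (by omega) (by omega)
    have hb := hsegE (-1, 0) (by simp) (x, y) (x - x').toNat hgood
    rw [ptm1, show x - ((x - x').toNat : ℤ) = x' by omega] at hb
    have hcast : (((x - x').toNat : ℕ) : ℝ) = ((x - x' : ℤ) : ℝ) := by exact_mod_cast hn
    rwa [hcast] at hb
  have hseg_up : ∀ x y y' : ℤ, y ≤ y' → (∀ t : ℤ, y ≤ t → t < y' → Good (x, t)) →
      ‖u (x, y') - u (x, y)‖ ≤ ((y' - y : ℤ) : ℝ) * K := by
    intro x y y' hyy hg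
    have hn : ((y' - y).toNat : ℤ) = y' - y := Int.toNat_of_nonneg (by omega)
    have hgood : ∀ k < (y' - y).toNat, Good (((x, y) : ℤ × ℤ) + k • ((0 : ℤ), (1 : ℤ))) := by
      intro k hk; rw [pt2]; exact hg _ (by omega) (by omega)
    have hb := hsegE (0, 1) (by simp) (x, y) (y' - y).toNat hgood
    rw [pt2, show y + ((y' - y).toNat : ℤ) = y' by omega] at hb
    have hcast : (((y' - y).toNat : ℕ) : ℝ) = ((y' - y : ℤ) : ℝ) := by exact_mod_cast hn
    rwa [hcast] at hb
  have h56 : 5 * R / 6 ≤ (N : ℝ) := by linarith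
  have haRe : (a : ℝ) ≤ N := by exact_mod_cast haN.2
  have haRe' : -(N : ℝ) ≤ a := by exact_mod_cast haN.1
  have hbRe : (b : ℝ) ≤ N := by exact_mod_cast hbN.2
  have hbRe' : -(N : ℝ) ≤ b := by exact_mod_cast hbN.1
  rcases le_or_gt 0 a with ha0 | ha0
  · -- a ≥ 0 : right to (N, b), then up to (N, N)
    have ha0R : (0 : ℝ) ≤ a := by exact_mod_cast ha0
    have g1 : ∀ t : ℤ, a ≤ t → t < N → Good (t, b) := by
      intro t ht1 ht2
      have ht1R : (a : ℝ) ≤ t := by exact_mod_cast ht1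
      have ht2R : (t : ℝ) ≤ N := by exact_mod_cast ht2.le
      refine ⟨hl1.trans (latNorm_mono ?_), hup _ (by rw [abs_of_nonneg (by linarith)]; linarith)
        (by rw [abs_le]; constructor <;> [cases abs_le.mp hbR; skip] <;> linarith)⟩
      simp only; nlinarith
    have g2 : ∀ t : ℤ, b ≤ t → t < N → Good (N, t) := by
      intro t ht1 ht2
      have ht1R : (b : ℝ) ≤ t := by exact_mod_cast ht1
      have ht2R : (t : ℝ) ≤ N := by exact_mod_cast ht2.le
      exact hNgood _ (Or.inl habs) habs.le (by rw [abs_le]; constructor <;> linarith)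
    have s1 := hseg_right a b N haN.2 g1
    have s2 := hseg_up N b N hbN.2 g2
    have tri := norm_sub_le_norm_sub_add_norm_sub (u (a, b)) (u (N, b)) (u (N, N))
    rw [norm_sub_rev (u (a,b)) (u (N,b)), norm_sub_rev (u (N,b)) (u (N,N))] at tri
    push_cast at s1 s2
    have m1 : ((N : ℝ) - a) * K ≤ 2 * N * K := mul_le_mul_of_nonneg_right (by linarith) hK0
    have m2 : ((N : ℝ) - b) * K ≤ 2 * N * K := mul_le_mul_of_nonneg_right (by linarith) hK0
    linarith [mul_nonneg hN0 hK0]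
  · rcases le_or_gt 0 b with hb0 | hb0
    · -- a < 0, b ≥ 0 : up to (a, N), then right to (N, N)
      have hb0R : (0 : ℝ) ≤ b := by exact_mod_cast hb0
      have g1 : ∀ t : ℤ, b ≤ t → t < N → Good (a, t) := by
        intro t ht1 ht2
        have ht1R : (b : ℝ) ≤ t := by exact_mod_cast ht1
        have ht2R : (t : ℝ) ≤ N := by exact_mod_cast ht2.le
        refine ⟨hl1.trans (latNorm_mono ?_), hup _
          (by rw [abs_le]; constructor <;> [cases abs_le.mp haR; skip] <;> linarith)
          (by rw [abs_of_nonneg (by linarith)]; linarith)⟩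
        simp only; nlinarith
      have g2 : ∀ t : ℤ, a ≤ t → t < N → Good (t, N) := by
        intro t ht1 ht2
        have ht1R : (a : ℝ) ≤ t := by exact_mod_cast ht1
        have ht2R : (t : ℝ) ≤ N := by exact_mod_cast ht2.le
        exact hNgood _ (Or.inr habs) (by rw [abs_le]; constructor <;> linarith) habs.le
      have s1 := hseg_up a b N hbN.2 g1
      have s2 := hseg_right a N N haN.2 g2
      have tri := norm_sub_le_norm_sub_add_norm_sub (u (a, b)) (u (a, N)) (u (N, N))
      rw [norm_sub_rev (u (a,b)) (u (a,N)), norm_sub_rev (u (a,N)) (u (N,N))] at tri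
      push_cast at s1 s2
      have m1 : ((N : ℝ) - b) * K ≤ 2 * N * K := mul_le_mul_of_nonneg_right (by linarith) hK0
      have m2 : ((N : ℝ) - a) * K ≤ 2 * N * K := mul_le_mul_of_nonneg_right (by linarith) hK0
      linarith [mul_nonneg hN0 hK0]
    · -- a < 0, b < 0 : left to (-N, b), up to (-N, N), right to (N, N)
      have ha0R : (a : ℝ) ≤ 0 := by exact_mod_cast ha0.le
      have habsN : |((-N : ℤ) : ℝ)| = (N : ℝ) := by push_cast; rw [abs_neg]; exact habs
      have g1 : ∀ t : ℤ, -N < t → t ≤ a → Good (t, b) := by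
        intro t ht1 ht2
        have ht1R : -(N : ℝ) ≤ t := by exact_mod_cast ht1.le
        have ht2R : (t : ℝ) ≤ a := by exact_mod_cast ht2
        refine ⟨hl1.trans (latNorm_mono ?_), hup _
          (by rw [abs_le]; constructor <;> linarith)
          (by rw [abs_le]; constructor <;> [cases abs_le.mp hbR; skip] <;> linarith)⟩
        simp only; nlinarith
      have g2 : ∀ t : ℤ, b ≤ t → t < N → Good (-N, t) := by
        intro t ht1 ht2
        have ht1R : (b : ℝ) ≤ t := by exact_mod_cast ht1
        have ht2R : (t : ℝ) ≤ N := by exact_mod_cast ht2.le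
        exact hNgood (-N, t) (Or.inl habsN) habsN.le (by rw [abs_le]; constructor <;> linarith)
      have g3 : ∀ t : ℤ, -N ≤ t → t < N → Good (t, N) := by
        intro t ht1 ht2
        have ht1R : -(N : ℝ) ≤ t := by exact_mod_cast ht1
        have ht2R : (t : ℝ) ≤ N := by exact_mod_cast ht2.le
        exact hNgood _ (Or.inr habs) (by rw [abs_le]; constructor <;> linarith) habs.le
      have s1 := hseg_left a b (-N) haN.1 g1
      have s2 := hseg_up (-N) b N hbN.2 g2
      have s3 := hseg_right (-N) N N (by omega) g3
      have tri := dist_triangle4 (u (a, b)) (u (-N, b)) (u (-N, N)) (u (N, N))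
      simp only [dist_eq_norm] at tri
      rw [norm_sub_rev (u (a,b)) (u (-N,b)), norm_sub_rev (u (-N,b)) (u (-N,N)),
        norm_sub_rev (u (-N,N)) (u (N,N))] at tri
      push_cast at s1 s2 s3
      have m1 : ((a : ℝ) + N) * K ≤ 2 * N * K := mul_le_mul_of_nonneg_right (by linarith) hK0
      have m2 : ((N : ℝ) - b) * K ≤ 2 * N * K := mul_le_mul_of_nonneg_right (by linarith) hK0
      linarith [mul_nonneg hN0 hK0]

set_option maxHeartbeats 1000000 in
/-- Discrete oscillation bound on the lattice annulus {2R/3 ≤ |ℓ| ≤ 5R/6} for a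
lattice displacement with the generic decay (2.2) of dislocation core correctors. -/
theorem stmt_9 (c : ℝ) (hc : 0 < c) :
    ∃ C : ℝ, 0 < C ∧ ∃ R₀ : ℝ, 4 ≤ R₀ ∧
      ∀ u : ℤ × ℤ → EuclideanSpace ℝ (Fin 3),
        (∀ ℓ : ℤ × ℤ, ℓ ≠ (0, 0) →
          ∀ ρ ∈ ({(1, 0), (-1, 0), (0, 1), (0, -1)} : Set (ℤ × ℤ)),
            ‖u (ℓ + ρ) - u ℓ‖ ≤ c * ((1 + latNorm ℓ) ^ 2)⁻¹ * Real.log (2 + latNorm ℓ)) →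
        ∀ R : ℝ, R₀ ≤ R →
          ∀ ℓ m : ℤ × ℤ,
            2 * R / 3 ≤ latNorm ℓ → latNorm ℓ ≤ 5 * R / 6 →
            2 * R / 3 ≤ latNorm m → latNorm m ≤ 5 * R / 6 →
            ‖u ℓ - u m‖ ≤ C * R⁻¹ * Real.log R := by
  refine ⟨100 * c, by linarith, 4, le_refl 4, ?_⟩
  intro u H R hR ℓ m hl1 hl2 hm1 hm2
  have hR0 : (0 : ℝ) < R := by linarith
  set N : ℤ := ⌈R⌉ with hNdef
  have hN : R ≤ (N : ℝ) := Int.le_ceil R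
  have hN2 : (N : ℝ) ≤ R + 1 := (Int.ceil_lt_add_one R).le
  set K : ℝ := c * ((2 * R / 3) ^ 2)⁻¹ * Real.log (2 + 2 * R) with hKdef
  have hK0 : 0 ≤ K := by
    apply mul_nonneg (mul_nonneg hc.le (by positivity))
    exact Real.log_nonneg (by linarith)
  have hstep : ∀ p : ℤ × ℤ, 2 * R / 3 ≤ latNorm p → latNorm p ≤ 2 * R →
      ∀ ρ ∈ ({(1, 0), (-1, 0), (0, 1), (0, -1)} : Set (ℤ × ℤ)),
        ‖u (p + ρ) - u p‖ ≤ K := by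
    intro p hp1 hp2 ρ hρ
    have hpne : p ≠ (0, 0) := by
      intro hp; rw [hp, latNorm_zero] at hp1; linarith
    refine (H p hpne ρ hρ).trans ?_
    have h1 : (2 * R / 3) ^ 2 ≤ (1 + latNorm p) ^ 2 := by nlinarith [latNorm_nonneg p]
    have hinv : ((1 + latNorm p) ^ 2)⁻¹ ≤ ((2 * R / 3) ^ 2)⁻¹ :=
      inv_anti₀ (by positivity) h1
    have h2 : Real.log (2 + latNorm p) ≤ Real.log (2 + 2 * R) :=
      Real.log_le_log (by nlinarith [latNorm_nonneg p]) (by linarith)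
    rw [hKdef]
    apply mul_le_mul (mul_le_mul_of_nonneg_left hinv hc.le) h2
      (Real.log_nonneg (by nlinarith [latNorm_nonneg p])) (by positivity)
  have r1 := reach u R hR K hK0 N hN hN2 hstep ℓ hl1 hl2
  have r2 := reach u R hR K hK0 N hN hN2 hstep m hm1 hm2
  have tri : ‖u ℓ - u m‖ ≤ ‖u ℓ - u (N, N)‖ + ‖u m - u (N, N)‖ := by
    have t := norm_sub_le_norm_sub_add_norm_sub (u ℓ) (u (N, N)) (u m)
    rw [norm_sub_rev (u (N, N)) (u m)] at t
    exact t
  have hlogR : 0 < Real.log R := Real.log_pos (by linarith)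
  have hlog2 : Real.log (2 + 2 * R) ≤ 2 * Real.log R := by
    have t : Real.log (2 + 2 * R) ≤ Real.log (R ^ 2) :=
      Real.log_le_log (by linarith) (by nlinarith)
    rwa [Real.log_pow, Nat.cast_ofNat] at t
  have hKle : K ≤ 6 * c * (R ^ 2)⁻¹ * Real.log R := by
    have e : ((2 * R / 3) ^ 2)⁻¹ = (9 / 4) * (R ^ 2)⁻¹ := by
      rw [show (2 * R / 3) ^ 2 = (4 / 9) * R ^ 2 by ring, mul_inv]; norm_num
    rw [hKdef, e]
    have t1 : c * (9 / 4 * (R ^ 2)⁻¹) * Real.log (2 + 2 * R)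
        ≤ c * (9 / 4 * (R ^ 2)⁻¹) * (2 * Real.log R) :=
      mul_le_mul_of_nonneg_left hlog2 (by positivity)
    have t2 : (0 : ℝ) ≤ c * (R ^ 2)⁻¹ * Real.log R := by positivity
    nlinarith
  have hfin : 12 * (N : ℝ) * K ≤ 100 * c * R⁻¹ * Real.log R := by
    have h1 : 12 * (N : ℝ) * K ≤ 15 * R * K :=
      mul_le_mul_of_nonneg_right (by linarith) hK0
    have h2 : 15 * R * K ≤ 15 * R * (6 * c * (R ^ 2)⁻¹ * Real.log R) :=
      mul_le_mul_of_nonneg_left hKle (by linarith)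
    have e2 : 15 * R * (6 * c * (R ^ 2)⁻¹ * Real.log R) = 90 * c * R⁻¹ * Real.log R := by
      field_simp; ring
    have h3 : (0 : ℝ) ≤ c * R⁻¹ * Real.log R := by positivity
    rw [e2] at h2
    linarith
  linarith
end
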